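/- Let f be a non-erasing morphism on {a,b} and u a primitive word with |u|_a ≥ 1 and |u|_b ≥ 1. If f(u) is not primitive, then f is weakly quasiperiodic on finite words and weakly quasiperiodic on infinite words. -/

import Mathlib

/-!
Write `f u = V ^ k` with `k ≥ 2`. The lexicographically least rotation `l` of the primitive word
`u` is unbordered, since a border would make `l` the product of two commuting words, hence a
proper power. The image of `l` is again a `k`-th power `W ^ k`, and ordering the two letters
suitably prescribes the last letter `c` of `l`; let `l₀` be its first letter.

Finite words: `l l₀` is not quasiperiodic, as a quasiperiod would produce a border of `l`; its
image `W ^ k f(l₀)` is a prefix of `W ^ ω` of length at least `2 |W|`, hence quasiperiodic.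

Infinite words: write `l = π c` with `|f c| ≤ (k - 1) |W|`. The word `π l ^ ω` is not
quasiperiodic: a quasiperiod shorter than `l` that covers the end of the first period `l` gives a
border of `l`, while a longer one begins with `π l₀`, which cannot be a rotation of `π c`. The
image `f(π) W ^ ω` has quasiperiod `f(π)`, a prefix of `W ^ k` of length at least `|W|`.
-/

namespace QPm

variable {A : Type*}

/-- Image of a finite word under a morphism given by images of letters. -/
def applyF (f : A → List A) (w : List A) : List A := (w.map f).flatten

/-- A morphism is non-erasing if images of letters are nonempty. -/
def NonErasing (f : A → List A) : Prop := ∀ a, f a ≠ []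

/-- `wpow u k` is the `k`-fold concatenation `u^k`. -/
def wpow (u : List A) (k : ℕ) : List A := (List.replicate k u).flatten

/-- Every position of `w` is covered by an occurrence of `q` in `w`. -/
def Covers (q w : List A) : Prop :=
  ∀ i < w.length, ∃ j, j ≤ i ∧ i < j + q.length ∧ j + q.length ≤ w.length ∧
    (w.drop j).take q.length = q

/-- `w` is `q`-quasiperiodic. -/
def QP (q w : List A) : Prop := q ≠ [] ∧ w ≠ q ∧ Covers q w

def Quasiperiodic (w : List A) : Prop := ∃ q, QP q w

def Superprimitive (w : List A) : Prop := ¬ Quasiperiodic w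

/-- `q` is THE quasiperiod (shortest quasiperiod) of `w`. -/
def IsQuasiperiod (q w : List A) : Prop :=
  QP q w ∧ ∀ q', QP q' w → q.length ≤ q'.length

/-- Every position of the infinite word `x` is covered by an occurrence of `q`. -/
def InfCovers (q : List A) (x : ℕ → A) : Prop :=
  ∀ i : ℕ, ∃ j, j ≤ i ∧ i < j + q.length ∧
    ∀ t (ht : t < q.length), x (j + t) = q.get ⟨t, ht⟩

/-- The infinite word `x` is `q`-quasiperiodic. -/
def InfQP (q : List A) (x : ℕ → A) : Prop := q ≠ [] ∧ InfCovers q x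

def InfQuasiperiodic (x : ℕ → A) : Prop := ∃ q, InfQP q x

/-- `q` is THE quasiperiod (shortest quasiperiod) of the infinite word `x`. -/
def IsInfQuasiperiod (q : List A) (x : ℕ → A) : Prop :=
  InfQP q x ∧ ∀ q', InfQP q' x → q.length ≤ q'.length

/-- Image of an infinite word under a (non-erasing) morphism: the `n`-th letter
of `f(x)` is the `n`-th letter of the image of a sufficiently long prefix. -/
def mapInf (f : A → List A) (x : ℕ → A) (n : ℕ) : A :=
  (applyF f (List.ofFn (fun i : Fin (n + 1) => x i))).getD n (x 0)

/-- `f` maps every (nonempty) finite word to a quasiperiodic word. -/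
def StronglyQPFin (f : A → List A) : Prop :=
  ∀ w : List A, w ≠ [] → Quasiperiodic (applyF f w)

/-- `f` maps every infinite word to a quasiperiodic infinite word. -/
def StronglyQPInf (f : A → List A) : Prop :=
  ∀ x : ℕ → A, InfQuasiperiodic (mapInf f x)

/-- `f` maps some non-quasiperiodic finite word to a quasiperiodic word. -/
def WeaklyQPFin (f : A → List A) : Prop :=
  ∃ w : List A, ¬ Quasiperiodic w ∧ Quasiperiodic (applyF f w)

/-- `f` maps some non-quasiperiodic infinite word to a quasiperiodic word. -/
def WeaklyQPInf (f : A → List A) : Prop :=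
  ∃ x : ℕ → A, ¬ InfQuasiperiodic x ∧ InfQuasiperiodic (mapInf f x)

/-- The ultimately periodic infinite word `u v^ω` (with default letter `d`
used only when `v` is empty). -/
def ultPer (u v : List A) (d : A) : ℕ → A :=
  fun n => if h : n < u.length then u.get ⟨n, h⟩
           else v.getD ((n - u.length) % v.length) d

/-- A finite word is primitive if it is not a power `u^k` with `k ≥ 2`. -/
def Primitive (w : List A) : Prop :=
  ¬ ∃ (u : List A) (k : ℕ), 2 ≤ k ∧ w = wpow u k

/-- `k`-fold composition of the morphism `f`. -/
def iterF (f : A → List A) : ℕ → A → List A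
  | 0, a => [a]
  | (k + 1), a => applyF f (iterF f k a)

section Words

@[simp] lemma wpow_zero (V : List A) : wpow V 0 = [] := rfl

lemma wpow_succ (V : List A) (k : ℕ) : wpow V (k + 1) = V ++ wpow V k := by
  simp [wpow, List.replicate_succ]

lemma wpow_add (V : List A) (m n : ℕ) : wpow V (m + n) = wpow V m ++ wpow V n := by
  simp only [wpow, List.replicate_add, List.flatten_append]

lemma wpow_one (V : List A) : wpow V 1 = V := by
  simp [wpow]

lemma wpow_mul (V : List A) (m n : ℕ) : wpow (wpow V m) n = wpow V (m * n) := by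
  induction n with
  | zero => rfl
  | succ n ih => rw [wpow_succ, ih, Nat.mul_succ, Nat.add_comm, wpow_add]

@[simp] lemma length_wpow (V : List A) (k : ℕ) : (wpow V k).length = k * V.length := by
  simp [wpow]

@[simp] lemma nil_wpow (k : ℕ) : wpow ([] : List A) k = [] := by
  simp [wpow]

lemma wpow_isPrefix_wpow (V : List A) {m n : ℕ} (h : m ≤ n) : wpow V m <+: wpow V n := by
  obtain ⟨d, rfl⟩ := Nat.exists_eq_add_of_le h
  rw [wpow_add]
  exact List.prefix_append _ _

lemma drop_mul_wpow (V : List A) (s n : ℕ) : (wpow V (s + n)).drop (s * V.length) = wpow V n := by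
  rw [wpow_add, ← length_wpow V s, List.drop_left' rfl]

lemma drop_wpow (V : List A) (s n : ℕ) {t : ℕ} (ht : t ≤ V.length) :
    (wpow V (s + (n + 1))).drop (s * V.length + t) = V.drop t ++ wpow V n := by
  rw [wpow_add, wpow_succ, ← length_wpow V s, List.drop_length_add_append,
    List.drop_append_of_le_length ht]

lemma getElem_wpow (V : List A) (k : ℕ) {i : ℕ} (hi : i < (wpow V k).length) :
    (wpow V k)[i] = V[i % V.length]'(Nat.mod_lt _ (by simp at hi; nlinarith)) := by
  induction k generalizing i with
  | zero => simp at hi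
  | succ k ih =>
    simp only [wpow_succ, List.getElem_append]
    split_ifs with h
    · simp [Nat.mod_eq_of_lt h]
    · rw [ih]
      simp [Nat.mod_eq_sub_mod (not_lt.mp h)]

lemma cons_append_wpow (a : A) (V : List A) (k : ℕ) :
    a :: wpow (V ++ [a]) k = wpow (a :: V) k ++ [a] := by
  induction k with
  | zero => rfl
  | succ k ih => simp [wpow_succ, ih]

lemma rotate_one_wpow (V : List A) (k : ℕ) : (wpow V k).rotate 1 = wpow (V.rotate 1) k := by
  cases V with
  | nil => simp
  | cons a V =>
    cases k with
    | zero => simp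
    | succ k =>
      rw [wpow_succ, List.cons_append, List.rotate_cons_succ, List.rotate_zero,
        List.rotate_cons_succ, List.rotate_zero, wpow_succ, List.append_assoc,
        ← cons_append_wpow]
      simp

lemma rotate_wpow (V : List A) (k n : ℕ) : (wpow V k).rotate n = wpow (V.rotate n) k := by
  induction n with
  | zero => simp
  | succ n ih => rw [← List.rotate_rotate, ih, rotate_one_wpow, List.rotate_rotate]

lemma exists_eq_wpow_of_isRotated {w V : List A} {k : ℕ} (h : w ~r wpow V k) :
    ∃ V', w = wpow V' k ∧ V'.length = V.length := by
  obtain ⟨n, hn⟩ := h.symm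
  exact ⟨V.rotate n, by rw [← hn, rotate_wpow], List.length_rotate _ _⟩

lemma Primitive.isRotated {u v : List A} (hu : Primitive u) (h : u ~r v) : Primitive v := by
  rintro ⟨t, k, hk, rfl⟩
  obtain ⟨t', rfl, -⟩ := exists_eq_wpow_of_isRotated h
  exact hu ⟨t', k, hk, rfl⟩

lemma exists_wpow_of_append_comm {X Y : List A} (h : X ++ Y = Y ++ X) :
    ∃ t a b, X = wpow t a ∧ Y = wpow t b := by
  induction hn : X.length + Y.length using Nat.strong_induction_on generalizing X Y with
  | _ n ih =>
  wlog hle : X.length ≤ Y.length generalizing X Y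
  · obtain ⟨t, a, b, hX, hY⟩ := this h.symm (by omega) (by omega)
    exact ⟨t, b, a, hY, hX⟩
  rcases eq_or_ne X [] with rfl | hX
  · exact ⟨Y, 0, 1, rfl, by simp [wpow]⟩
  obtain ⟨Z, rfl⟩ : X <+: Y :=
    List.prefix_of_prefix_length_le ⟨Y, h⟩ (List.prefix_append Y X) hle
  have hXZ : X ++ Z = Z ++ X := by simpa using h
  have hXpos := List.length_pos_iff.mpr hX
  obtain ⟨t, a, b, rfl, rfl⟩ := ih _ (by simp at hn; omega) hXZ rfl
  exact ⟨t, a, a + b, rfl, (wpow_add t a b).symm⟩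

end Words

section Morphism

variable (f : A → List A)

@[simp] lemma applyF_nil : applyF f [] = [] := rfl

@[simp] lemma applyF_append (v w : List A) : applyF f (v ++ w) = applyF f v ++ applyF f w := by
  simp [applyF]

lemma applyF_cons (a : A) (w : List A) : applyF f (a :: w) = f a ++ applyF f w := by
  simp [applyF]

lemma applyF_singleton (a : A) : applyF f [a] = f a := by
  simp [applyF]

lemma applyF_wpow (V : List A) (k : ℕ) : applyF f (wpow V k) = wpow (applyF f V) k := by
  induction k with
  | zero => rfl
  | succ k ih => rw [wpow_succ, applyF_append, ih, wpow_succ]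

lemma length_le_length_applyF {f : A → List A} (hf : NonErasing f) (w : List A) :
    w.length ≤ (applyF f w).length := by
  induction w with
  | nil => simp
  | cons a w ih =>
    have := List.length_pos_iff.mpr (hf a)
    simp only [applyF_cons, List.length_cons, List.length_append]
    omega

variable {f}

lemma applyF_isPrefix_applyF {v w : List A} (h : v <+: w) : applyF f v <+: applyF f w := by
  obtain ⟨t, rfl⟩ := h
  simp

lemma applyF_isRotated_applyF {v w : List A} (h : v ~r w) : applyF f v ~r applyF f w := by
  obtain ⟨n, rfl⟩ := h
  rw [List.rotate_eq_drop_append_take_mod, applyF_append]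
  conv_lhs => rw [← List.take_append_drop (n % v.length) v, applyF_append]
  exact List.isRotated_append

end Morphism

section Unbordered

def Unbordered (l : List A) : Prop := ∀ t, 0 < t → t < l.length → ¬ l.drop t <+: l

variable [LinearOrder A]

lemma le_of_append_le_append_left {T S X : List A} (h : T ++ S ≤ T ++ X) : S ≤ X :=
  not_lt.mp fun hlt => not_le.mpr (List.append_left_lt hlt) h

lemma append_lt_append_of_lt_of_length_eq {S X : List A} (h : S < X)
    (hlen : S.length = X.length) (T T' : List A) : S ++ T < X ++ T' := by
  change List.Lex (· < ·) S X at h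
  change List.Lex (· < ·) (S ++ T) (X ++ T')
  induction h with
  | nil => simp at hlen
  | cons _ ih => exact List.Lex.cons (ih (by simpa using hlen))
  | rel h => exact List.Lex.rel h

lemma le_of_append_le_append_of_length_eq {X S T T' : List A} (hlen : X.length = S.length)
    (h : X ++ T ≤ S ++ T') : X ≤ S :=
  not_lt.mp fun hlt => not_le.mpr (append_lt_append_of_lt_of_length_eq hlt hlen.symm T' T) h

lemma Primitive.unbordered_of_forall_le_rotate {l : List A} (hl : Primitive l)
    (hmin : ∀ d, l ≤ l.rotate d) : Unbordered l := by
  intro d hd hdL hT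
  set T := l.drop d with hT_def
  set X := l.take d with hX_def
  set S := l.drop (l.length - d) with hS_def
  have hXT : X ++ T = l := List.take_append_drop d l
  have hTS : T ++ S = l := by
    rw [List.prefix_iff_eq_take.mp hT, hT_def, List.length_drop]
    exact List.take_append_drop _ l
  have hSX : S ≤ X := by
    refine le_of_append_le_append_left (T := T) ?_
    rw [hTS, ← List.rotate_eq_drop_append_take hdL.le]
    exact hmin d
  have hXS : X ≤ S := by
    refine le_of_append_le_append_of_length_eq (T := T) (T' := T)
      (by simp [hX_def, hS_def]; omega) ?_
    rw [hXT, ← List.rotate_append_length_eq T S, hTS]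
    exact hmin _
  obtain ⟨t, a, b, hX, hTt⟩ :=
    exists_wpow_of_append_comm (X := X) (Y := T) (by rw [hXT, le_antisymm hXS hSX, hTS])
  have ha : a ≠ 0 := by
    rintro rfl
    have := congrArg List.length hX
    simp only [hX_def, List.length_take, length_wpow] at this
    omega
  have hb : b ≠ 0 := by
    rintro rfl
    have := congrArg List.length hTt
    simp only [hT_def, List.length_drop, length_wpow] at this
    omega
  exact hl ⟨t, a + b, by omega, by rw [← hXT, hX, hTt, wpow_add]⟩

theorem exists_isRotated_unbordered {u : List A} (hu : Primitive u) (hlen : 2 ≤ u.length) :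
    ∃ l, u ~r l ∧ Unbordered l ∧ l.take 1 < l.drop (l.length - 1) := by
  obtain ⟨n, -, hmin⟩ := Finset.exists_min_image (Finset.range (u.length + 1)) u.rotate
    ⟨0, by simp⟩
  have hrot : u ~r u.rotate n := ⟨n, rfl⟩
  generalize u.rotate n = l at hmin hrot
  have hL : l.length = u.length := hrot.perm.length_eq.symm
  have hl_le (d : ℕ) : l ≤ l.rotate d := by
    obtain ⟨m, hm, hlm⟩ :=
      List.isRotated_iff_mod.mp (hrot.trans (List.IsRotated.forall l d).symm)
    rw [← hlm]
    exact hmin m (Finset.mem_range.mpr (by omega))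
  have hunb := (hu.isRotated hrot).unbordered_of_forall_le_rotate hl_le
  refine ⟨l, hrot, hunb, lt_of_le_of_ne ?_ fun h => ?_⟩
  · refine le_of_append_le_append_of_length_eq (T := l.drop 1) (T' := l.take (l.length - 1))
      (by simp; omega) ?_
    rw [List.take_append_drop, ← List.rotate_eq_drop_append_take (by omega)]
    exact hl_le _
  · exact hunb (l.length - 1) (by omega) (by omega) (h ▸ List.take_prefix 1 l)

lemma exists_lt_of_take_one_lt_drop {l : List A} (hL : 2 ≤ l.length)
    (h : l.take 1 < l.drop (l.length - 1)) : ∃ a b, a < b ∧ l.drop (l.length - 1) = [b] := by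
  obtain ⟨a, ha⟩ := List.length_eq_one_iff.mp (show (l.take 1).length = 1 by simp; omega)
  obtain ⟨b, hb⟩ :=
    List.length_eq_one_iff.mp (show (l.drop (l.length - 1)).length = 1 by simp; omega)
  rw [ha, hb, List.cons_lt_cons_iff] at h
  exact ⟨a, b, h.resolve_right (by simp), hb⟩

end Unbordered

lemma exists_isRotated_unbordered_drop_eq {u : List Bool} (hu : Primitive u)
    (hlen : 2 ≤ u.length) (c : Bool) :
    ∃ l, u ~r l ∧ Unbordered l ∧ l.drop (l.length - 1) = [c] := by
  cases c
  · -- in the reversed order of the letters, `false` is the larger one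
    obtain ⟨l, hrot, hunb, hlt⟩ := exists_isRotated_unbordered (A := Boolᵒᵈ) hu hlen
    obtain ⟨a, b, hab, hb⟩ := exists_lt_of_take_one_lt_drop (hrot.perm.length_eq ▸ hlen) hlt
    have hb' : OrderDual.ofDual b = false :=
      (Bool.lt_iff.mp (OrderDual.ofDual_lt_ofDual.mpr hab)).1
    exact ⟨l, hrot, hunb, hb.trans (congrArg (· :: []) hb')⟩
  · obtain ⟨l, hrot, hunb, hlt⟩ := exists_isRotated_unbordered hu hlen
    obtain ⟨a, b, hab, hb⟩ := exists_lt_of_take_one_lt_drop (hrot.perm.length_eq ▸ hlen) hlt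
    exact ⟨l, hrot, hunb, hb.trans (by rw [(Bool.lt_iff.mp hab).2])⟩

section Finite

lemma Covers.exists_isPrefix_drop {q w : List A} (h : Covers q w) {i : ℕ} (hi : i < w.length) :
    ∃ j ≤ i, i < j + q.length ∧ j + q.length ≤ w.length ∧ q <+: w.drop j := by
  obtain ⟨j, hji, hij, hjw, hq⟩ := h i hi
  exact ⟨j, hji, hij, hjw, hq ▸ List.take_prefix _ _⟩

lemma quasiperiodic_of_drop_isPrefix {w : List A} {p : ℕ} (hp : 0 < p) (hw : 2 * p ≤ w.length)
    (h : w.drop p <+: w) : Quasiperiodic w := by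
  refine ⟨w.drop p, ?_, fun heq => ?_, fun i hi => ?_⟩
  · rw [← List.length_pos_iff, List.length_drop]
    omega
  · have := congrArg List.length heq
    simp only [List.length_drop] at this
    omega
  · by_cases hip : i < w.length - p
    · exact ⟨0, by omega, by simpa using hip, by simp, (List.prefix_iff_eq_take.mp h).symm⟩
    · exact ⟨p, by omega, by simp; omega, by simp; omega, List.take_length⟩

lemma quasiperiodic_of_isPrefix_wpow {w V : List A} {n : ℕ} (hV : V ≠ []) (hw : w <+: wpow V n)
    (hlen : 2 * V.length ≤ w.length) : Quasiperiodic w := by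
  have hVpos := List.length_pos_iff.mpr hV
  obtain ⟨m, rfl⟩ : ∃ m, n = m + 1 := Nat.exists_eq_succ_of_ne_zero fun hn => by
    have := hw.length_le
    simp only [hn, length_wpow, zero_mul] at this
    omega
  refine quasiperiodic_of_drop_isPrefix hVpos hlen
    (List.prefix_of_prefix_length_le ?_ hw (by simp))
  have hdrop := hw.drop V.length
  rw [wpow_succ, List.drop_left' rfl] at hdrop
  exact hdrop.trans (wpow_isPrefix_wpow V (by omega))

lemma Unbordered.not_quasiperiodic_append_take_one {l : List A} (hl : Unbordered l)
    (hL : 2 ≤ l.length) : ¬ Quasiperiodic (l ++ l.take 1) := by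
  rintro ⟨q, hq_ne, hqw, hcov⟩
  have hq_pos := List.length_pos_iff.mpr hq_ne
  have hwlen : (l ++ l.take 1).length = l.length + 1 := by simp; omega
  obtain ⟨j₀, hj₀, -, -, hq⟩ := hcov.exists_isPrefix_drop (i := 0) (by omega)
  rw [Nat.le_zero.mp hj₀, List.drop_zero] at hq
  obtain ⟨j, -, hj, hjq, hqj⟩ := hcov.exists_isPrefix_drop (i := l.length) (by omega)
  have hq_eq : q = (l ++ l.take 1).drop j := hqj.eq_of_length (by simp; omega)
  have hj0 : j ≠ 0 := by
    rintro rfl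
    exact hqw hq_eq.symm
  rw [List.drop_append_of_le_length (by omega)] at hq_eq
  rcases (show j ≤ l.length by omega).lt_or_eq with hjL | rfl
  · refine hl j (by omega) hjL
      (List.prefix_of_prefix_length_le ?_ (List.prefix_append l (l.take 1)) (by simp))
    exact (hq_eq ▸ List.prefix_append _ _ : l.drop j <+: q).trans hq
  · -- `q` is the first letter of `l`, and it must also cover the last one
    rw [List.drop_length, List.nil_append] at hq_eq
    subst hq_eq
    obtain ⟨j', hj', hj'q, -, hqj'⟩ := hcov.exists_isPrefix_drop (i := l.length - 1) (by omega)
    have hlen1 : (l.take 1).length = 1 := by simp; omega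
    obtain rfl : j' = l.length - 1 := by omega
    rw [List.drop_append_of_le_length (by omega)] at hqj'
    have hborder : l.drop (l.length - 1) = l.take 1 :=
      (List.prefix_of_prefix_length_le (List.prefix_append _ _) hqj' (by simp; omega)).eq_of_length
        (by simp; omega)
    exact hl (l.length - 1) (by omega) (by omega) (hborder ▸ List.take_prefix 1 l)

theorem weaklyQPFin_of_unbordered {f : A → List A} {l V : List A} {k : ℕ} (hl : Unbordered l)
    (hL : 2 ≤ l.length) (hk : 2 ≤ k) (hV : V ≠ []) (himg : applyF f l = wpow V k) :
    WeaklyQPFin f := by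
  refine ⟨l ++ l.take 1, hl.not_quasiperiodic_append_take_one hL,
    quasiperiodic_of_isPrefix_wpow hV (n := k + k) ?_ ?_⟩
  · rw [applyF_append, himg, wpow_add]
    exact (List.prefix_append_right_inj _).mpr
      (himg ▸ applyF_isPrefix_applyF (List.take_prefix 1 l))
  · simp only [applyF_append, himg, List.length_append, length_wpow]
    nlinarith

end Finite

section Infinite

def InfPrefix (w : List A) (x : ℕ → A) : Prop := ∀ n (h : n < w.length), x n = w[n]

def InfOccursAt (q : List A) (x : ℕ → A) (j : ℕ) : Prop :=
  ∀ t (ht : t < q.length), x (j + t) = q.get ⟨t, ht⟩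

lemma InfPrefix.of_isPrefix {v w : List A} {x : ℕ → A} (hw : InfPrefix w x) (h : v <+: w) :
    InfPrefix v x := fun n hn => by
  rw [hw n (lt_of_lt_of_le hn h.length_le), h.getElem hn]

lemma InfPrefix.isPrefix {v w : List A} {x : ℕ → A} (hv : InfPrefix v x) (hw : InfPrefix w x)
    (h : v.length ≤ w.length) : v <+: w := by
  rw [List.prefix_iff_eq_take]
  refine List.ext_getElem (by simp; omega) fun n h₁ h₂ => ?_
  rw [← hv n h₁, hw n (by omega), List.getElem_take]

lemma InfPrefix.occursAt_iff {w q : List A} {x : ℕ → A} (hw : InfPrefix w x) {j : ℕ}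
    (hj : j + q.length ≤ w.length) : InfOccursAt q x j ↔ q <+: w.drop j := by
  constructor
  · intro h
    rw [List.prefix_iff_eq_take]
    refine List.ext_getElem (by simp; omega) fun t h₁ h₂ => ?_
    rw [List.getElem_take, List.getElem_drop, ← hw _ (by omega), h t h₁, List.get_eq_getElem]
  · intro h t ht
    rw [hw (j + t) (by omega), List.get_eq_getElem, h.getElem ht, List.getElem_drop]

lemma infPrefix_ofFn (x : ℕ → A) (n : ℕ) : InfPrefix (List.ofFn fun i : Fin n => x i) x :=
  fun m hm => by simp

lemma InfPrefix.applyF_mapInf {f : A → List A} (hf : NonErasing f) {w : List A} {x : ℕ → A}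
    (hw : InfPrefix w x) : InfPrefix (applyF f w) (mapInf f x) := by
  intro n hn
  set v := List.ofFn fun i : Fin (n + 1) => x i
  have hv : n < (applyF f v).length :=
    lt_of_lt_of_le (by simp [v]) (length_le_length_applyF hf v)
  rw [mapInf, List.getD_eq_getElem _ _ hv]
  rcases le_total v.length w.length with h | h
  · exact (applyF_isPrefix_applyF ((infPrefix_ofFn x _).isPrefix hw h)).getElem hv
  · exact ((applyF_isPrefix_applyF (hw.isPrefix (infPrefix_ofFn x _) h)).getElem hn).symm

lemma infPrefix_ultPer (u v : List A) (d : A) (M : ℕ) :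
    InfPrefix (u ++ wpow v M) (ultPer u v d) := by
  intro n hn
  rw [List.getElem_append]
  unfold ultPer
  split_ifs with h
  · rfl
  · rw [getElem_wpow, List.getD_eq_getElem]

lemma Unbordered.take_append_take_one_ne {l : List A} (hl : Unbordered l) (hL : 2 ≤ l.length)
    (t : ℕ) : l.take (l.length - 1) ++ l.take 1 ≠ l.drop t ++ l.take t := by
  intro h
  have hperm : (l.take (l.length - 1) ++ l.take 1).Perm
      (l.take (l.length - 1) ++ l.drop (l.length - 1)) := by
    rw [h, List.take_append_drop]
    exact List.perm_append_comm.trans (.of_eq (List.take_append_drop _ l))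
  obtain ⟨b, hb⟩ :=
    List.length_eq_one_iff.mp (show (l.drop (l.length - 1)).length = 1 by simp; omega)
  rw [hb, List.perm_append_left_iff, List.perm_singleton] at hperm
  exact hl (l.length - 1) (by omega) (by omega) (hb.trans hperm.symm ▸ List.take_prefix 1 l)

lemma InfOccursAt.isPrefix_drop_ultPer {π l Q : List A} {d : A} {r : ℕ} (hl : l ≠ [])
    (h : InfOccursAt Q (ultPer π l d) (π.length + r)) :
    Q <+: l.drop (r % l.length) ++ wpow l Q.length := by
  have hLpos := List.length_pos_iff.mpr hl
  have hQle : Q.length ≤ Q.length * l.length := Nat.le_mul_of_pos_right _ hLpos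
  have hr := Nat.div_add_mod' r l.length
  have ht := Nat.mod_lt r hLpos
  have hlen : (r / l.length + (Q.length + 1)) * l.length
      = r / l.length * l.length + Q.length * l.length + l.length := by ring
  rw [← drop_wpow l (r / l.length) Q.length ht.le, hr,
    ← List.drop_length_add_append (l₁ := π)]
  exact ((infPrefix_ultPer π l d _).occursAt_iff
    (by simp only [List.length_append, length_wpow]; omega)).mp h

lemma Unbordered.not_infQuasiperiodic_ultPer {l : List A} (hl : Unbordered l)
    (hL : 2 ≤ l.length) (d : A) : ¬ InfQuasiperiodic (ultPer (l.take (l.length - 1)) l d) := by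
  rintro ⟨Q, hQ, hcov⟩
  set π := l.take (l.length - 1)
  have hπ : π.length = l.length - 1 := by simp [π]
  have hl_ne : l ≠ [] := List.length_pos_iff.mp (by omega)
  have hQpos := List.length_pos_iff.mpr hQ
  have hQ0 : Q <+: π ++ wpow l Q.length := by
    obtain ⟨j₀, hj₀, -, h₀⟩ := hcov 0
    rw [Nat.le_zero.mp hj₀] at h₀
    have := Nat.le_mul_of_pos_right Q.length (show 0 < l.length by omega)
    simpa using ((infPrefix_ultPer π l d Q.length).occursAt_iff (by simp; omega)).mp h₀
  rcases lt_or_ge Q.length l.length with hshort | hlong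
  · -- the occurrence covering the last letter of the first period starts inside that period
    obtain ⟨j, hj, hjQ, hocc⟩ := hcov (π.length + (l.length - 1))
    obtain ⟨t, rfl⟩ : ∃ t, j = π.length + t := ⟨j - π.length, by omega⟩
    have hQt := InfOccursAt.isPrefix_drop_ultPer hl_ne hocc
    rw [Nat.mod_eq_of_lt (by omega)] at hQt
    have hQπ : Q <+: π := List.prefix_of_prefix_length_le hQ0 (List.prefix_append _ _) (by omega)
    refine hl t (by omega) (by omega) ((List.prefix_of_prefix_length_le (List.prefix_append _ _)
      hQt ?_).trans (hQπ.trans (List.take_prefix _ _)))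
    simp
    omega
  · -- an occurrence inside the periodic part makes the prefix `π ++ l.take 1` of `Q` a rotation
    obtain ⟨j, hj, hjQ, hocc⟩ := hcov (π.length + Q.length - 1)
    obtain ⟨r, rfl⟩ : ∃ r, j = π.length + r := ⟨j - π.length, by omega⟩
    have hQr := InfOccursAt.isPrefix_drop_ultPer hl_ne hocc
    have hwl : l <+: wpow l Q.length := by
      simpa only [wpow_one] using wpow_isPrefix_wpow l (show 1 ≤ Q.length by omega)
    have h₁ : π ++ l.take 1 <+: Q := List.prefix_of_prefix_length_le
      ((List.prefix_append_right_inj π).mpr ((List.take_prefix 1 l).trans hwl)) hQ0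
      (by simp; omega)
    have h₂ : l.drop (r % l.length) ++ l.take (r % l.length) <+: Q :=
      List.prefix_of_prefix_length_le
        ((List.prefix_append_right_inj _).mpr ((List.take_prefix _ l).trans hwl)) hQr
        (by simp; omega)
    have ht := Nat.mod_lt r (show 0 < l.length by omega)
    exact hl.take_append_take_one_ne hL (r % l.length)
      ((List.prefix_of_prefix_length_le h₁ h₂ (by simp; omega)).eq_of_length (by simp; omega))

lemma infQuasiperiodic_mapInf_ultPer {f : A → List A} (hf : NonErasing f) {π l V : List A}
    {k : ℕ} (hπ : π <+: l) (hV : V ≠ []) (himg : applyF f l = wpow V k)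
    (hlen : V.length ≤ (applyF f π).length) (d : A) :
    InfQuasiperiodic (mapInf f (ultPer π l d)) := by
  set P := applyF f π
  have hP : P <+: wpow V k := himg ▸ applyF_isPrefix_applyF hπ
  have hVpos := List.length_pos_iff.mpr hV
  have hk : 0 < k := Nat.pos_of_ne_zero fun hk => by
    have := hP.length_le
    simp only [hk, length_wpow, zero_mul] at this
    omega
  have hy (N : ℕ) : InfPrefix (P ++ wpow V N) (mapInf f (ultPer π l d)) := by
    have h := (infPrefix_ultPer π l d N).applyF_mapInf hf
    rw [applyF_append, applyF_wpow, himg, wpow_mul] at h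
    exact h.of_isPrefix ((List.prefix_append_right_inj P).mpr
      (wpow_isPrefix_wpow V (Nat.le_mul_of_pos_left N hk)))
  refine ⟨P, List.length_pos_iff.mp (by omega), fun i => ?_⟩
  by_cases hi : i < P.length
  · exact ⟨0, Nat.zero_le _, by omega, ((hy 0).occursAt_iff (by simp)).mpr (by simp)⟩
  · -- `P` occurs at every position `P.length + s * V.length`
    obtain ⟨s, hs₁, hs₂⟩ :
        ∃ s, s * V.length ≤ i - P.length ∧ i - P.length < s * V.length + V.length :=
      ⟨_, Nat.div_mul_le_self _ _, Nat.lt_div_mul_add hVpos⟩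
    refine ⟨P.length + s * V.length, by omega, by omega, ((hy (s + k)).occursAt_iff ?_).mpr ?_⟩
    · have := hP.length_le
      simp only [List.length_append, length_wpow, add_mul] at this ⊢
      omega
    · rw [List.drop_length_add_append, drop_mul_wpow]
      exact hP

theorem weaklyQPInf_of_unbordered {f : A → List A} (hf : NonErasing f) {l V : List A} {k : ℕ}
    {c : A} (hl : Unbordered l) (hL : 2 ≤ l.length) (hV : V ≠ [])
    (himg : applyF f l = wpow V k) (hlast : l.drop (l.length - 1) = [c])
    (hc : (f c).length + V.length ≤ k * V.length) : WeaklyQPInf f := by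
  refine ⟨_, hl.not_infQuasiperiodic_ultPer hL c,
    infQuasiperiodic_mapInf_ultPer hf (List.take_prefix _ l) hV himg ?_ c⟩
  have hsplit := congrArg (fun w => (applyF f w).length) (List.take_append_drop (l.length - 1) l)
  simp only [applyF_append, List.length_append, hlast, applyF_singleton, himg, length_wpow]
    at hsplit
  omega

end Infinite

lemma length_applyF_eq_count (f : Bool → List Bool) (w : List Bool) :
    (applyF f w).length = w.count true * (f true).length + w.count false * (f false).length := by
  induction w with
  | nil => simp
  | cons a w ih => cases a <;> simp [applyF_cons, ih] <;> ring

lemma exists_length_apply_add_le_mul {f : Bool → List Bool} {u V : List Bool} {k : ℕ} (hk : 2 ≤ k)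
    (ht : 1 ≤ u.count true) (hf : 1 ≤ u.count false) (hfu : applyF f u = wpow V k) :
    ∃ c, (f c).length + V.length ≤ k * V.length := by
  have hsum := length_applyF_eq_count f u
  rw [hfu, length_wpow] at hsum
  have h₁ := Nat.le_mul_of_pos_left (f true).length ht
  have h₂ := Nat.le_mul_of_pos_left (f false).length hf
  have h₃ := Nat.mul_le_mul_right V.length hk
  by_cases htrue : (f true).length + V.length ≤ k * V.length
  · exact ⟨true, htrue⟩
  · exact ⟨false, by omega⟩

theorem stmt15 (f : Bool → List Bool) (hf : NonErasing f) (u : List Bool)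
    (hu : Primitive u) (ha : 1 ≤ u.count true) (hb : 1 ≤ u.count false)
    (h : ¬ Primitive (applyF f u)) :
    WeaklyQPFin f ∧ WeaklyQPInf f := by
  obtain ⟨V, k, hk, hfu⟩ := not_not.mp h
  have hu2 : 2 ≤ u.length := by
    have := List.count_true_add_count_false u
    omega
  have hV : V ≠ [] := by
    rintro rfl
    have := length_le_length_applyF hf u
    simp only [hfu, nil_wpow, List.length_nil] at this
    omega
  obtain ⟨c, hc⟩ := exists_length_apply_add_le_mul hk ha hb hfu
  obtain ⟨l, hrot, hl, hlast⟩ := exists_isRotated_unbordered_drop_eq hu hu2 c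
  have hL : 2 ≤ l.length := hrot.perm.length_eq ▸ hu2
  obtain ⟨W, himg, hW⟩ :=
    exists_eq_wpow_of_isRotated (hfu ▸ (applyF_isRotated_applyF hrot).symm)
  have hW0 : W ≠ [] := List.length_pos_iff.mp (hW ▸ List.length_pos_iff.mpr hV)
  exact ⟨weaklyQPFin_of_unbordered hl hL hk hW0 himg,
    weaklyQPInf_of_unbordered hf hl hL hW0 himg hlast (hW ▸ hc)⟩

end QPm
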